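/- arXiv:0705.3822 — 2 statements merged into one kernel-verified Lean document; each statement's English description precedes it below -/
import Mathlib

section
/- Let X be a complete locally compact length space with basepoint x, let R > 0, and suppose δ ∈ CovSpec^R_cut(X,x). Then there exist a sequence (δ_j) strictly decreasing to δ and rectifiable loops σ_j in X with length L(σ_j) < 2δ_j such that for each j the homotopy class of α_j⁻¹·σ_j·α_j (for a path α_j from x to σ_j(0)) does not lie in π₁^{cut}(X,δ,R,x); that is, σ_j is not δ-homotopic to a collection of loops lying outside the closed ball B̄(x,R). -/
/- Common definitions: path length, length/geodesic spaces, δ-covering groups,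
   covering spectra, cut-off covering groups and spectra, free homotopy,
   loops-to-infinity. -/

open Metric Filter
open scoped NNReal ENNReal unitInterval

attribute [local instance] Path.Homotopic.setoid

/-- The length (total variation) of a path in a metric space. -/
noncomputable def pathLength {X : Type*} [MetricSpace X] {x y : X} (γ : Path x y) : ℝ≥0∞ :=
  eVariationOn γ Set.univ

/-- A metric space is a length space if the distance between any two points is the
infimum of the lengths of paths joining them. -/
def IsLengthSpace (X : Type*) [MetricSpace X] : Prop :=
  ∀ x y : X, ENNReal.ofReal (dist x y) = ⨅ γ : Path x y, pathLength γ

/-- A metric space is a geodesic space if any two points are joined by a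
distance-realizing path. -/
def IsGeodesicSpace (X : Type*) [MetricSpace X] : Prop :=
  ∀ x y : X, ∃ γ : Path x y, pathLength γ = ENNReal.ofReal (dist x y)

/-- The element of the fundamental group at `p` represented by the loop
`α⁻¹ · β · α` (i.e. follow `α` from `p` to `y`, the loop `β` at `y`, then `α` back). -/
noncomputable def loopClass {X : Type*} [TopologicalSpace X] {p y : X}
    (α : Path p y) (β : Path y y) : FundamentalGroup X p :=
  FundamentalGroup.fromPath (X := TopCat.of X) ⟦(α.trans β).trans α.symm⟧

/-- The δ-covering group `π₁(X, δ, p)`: the normal subgroup of `π₁(X,p)` generated by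
classes of loops `α⁻¹·β·α` with `β` lying in some open ball of radius `δ`. -/
noncomputable def coveringGroup (X : Type*) [MetricSpace X] (p : X) (δ : ℝ) :
    Subgroup (FundamentalGroup X p) :=
  Subgroup.normalClosure
    {g | ∃ (y : X) (β : Path y y) (α : Path p y),
      (∃ c : X, ∀ t, β t ∈ Metric.ball c δ) ∧ g = loopClass α β}

/-- The covering spectrum of `X` (with basepoint `p`). -/
def covSpec (X : Type*) [MetricSpace X] (p : X) : Set ℝ :=
  {δ | 0 < δ ∧ ∀ δ' > δ, coveringGroup X p δ' ≠ coveringGroup X p δ}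

/-- The `R` cut-off δ-covering group `π₁^{cut}(X, δ, R, x)`: the normal subgroup of
`π₁(X,x)` generated by classes of loops `α⁻¹·β·α` with `β` lying in some open ball of
radius `δ` or in the complement of the closed ball `B̄(x,R)`. -/
noncomputable def cutCoveringGroup (X : Type*) [MetricSpace X] (x : X) (δ R : ℝ) :
    Subgroup (FundamentalGroup X x) :=
  Subgroup.normalClosure
    {g | ∃ (y : X) (β : Path y y) (α : Path x y),
      ((∃ c : X, ∀ t, β t ∈ Metric.ball c δ) ∨ (∀ t, β t ∉ Metric.closedBall x R)) ∧
      g = loopClass α β}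

/-- The `R` cut-off covering spectrum of `(X,x)`. -/
def cutCovSpec (X : Type*) [MetricSpace X] (x : X) (R : ℝ) : Set ℝ :=
  {δ | 0 < δ ∧ ∀ δ' > δ, cutCoveringGroup X x δ' R ≠ cutCoveringGroup X x δ R}

/-- Two loops are freely homotopic: there is a homotopy through (not necessarily
based) loops from one to the other. -/
def FreelyHomotopic {X : Type*} [TopologicalSpace X] {a b : X}
    (γ₀ : Path a a) (γ₁ : Path b b) : Prop :=
  ∃ H : C(I × I, X),
    (∀ t, H (0, t) = γ₀ t) ∧ (∀ t, H (1, t) = γ₁ t) ∧ ∀ s, H (s, 0) = H (s, 1)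

/-- Two loops are freely homotopic within a subset `A`: the homotopy stays in `A`. -/
def FreelyHomotopicIn {X : Type*} [TopologicalSpace X] (A : Set X) {a b : X}
    (γ₀ : Path a a) (γ₁ : Path b b) : Prop :=
  ∃ H : C(I × I, X),
    (∀ t, H (0, t) = γ₀ t) ∧ (∀ t, H (1, t) = γ₁ t) ∧ (∀ s, H (s, 0) = H (s, 1)) ∧
    ∀ p, H p ∈ A

/-- A loop has the loops-to-infinity property: for every compact set it is freely
homotopic to a loop outside that set. -/
def LoopToInfinity {X : Type*} [TopologicalSpace X] {a : X} (γ : Path a a) : Prop :=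
  ∀ K : Set X, IsCompact K →
    ∃ (b : X) (η : Path b b), (∀ t, η t ∉ K) ∧ FreelyHomotopic γ η

/-- A space has the loops-to-infinity property if all of its loops do. -/
def LoopsToInfinity (X : Type*) [TopologicalSpace X] : Prop :=
  ∀ (a : X) (γ : Path a a), LoopToInfinity γ

/-- Concatenation of a finite list of loops based at `q`. -/
noncomputable def loopConcat {X : Type*} [TopologicalSpace X] (q : X) :
    List (Path q q) → Path q q
  | [] => Path.refl q
  | γ :: rest => γ.trans (loopConcat q rest)

/-- A space is semilocally simply connected if every point has a neighborhood in which
every loop is null-homotopic in the whole space. -/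
def SemilocallySimplyConnected (X : Type*) [TopologicalSpace X] : Prop :=
  ∀ x : X, ∃ U ∈ nhds x, ∀ (y : X) (γ : Path y y), (∀ t, γ t ∈ U) →
    γ.Homotopic (Path.refl y)

/-- A pointed ε-Hausdorff approximation. -/
def IsPointedHausdorffApprox {Z₁ Z₂ : Type*} [MetricSpace Z₁] [MetricSpace Z₂]
    (f : Z₁ → Z₂) (p₁ : Z₁) (p₂ : Z₂) (ε : ℝ) : Prop :=
  f p₁ = p₂ ∧ (∀ a b : Z₁, |dist (f a) (f b) - dist a b| < ε) ∧
    ∀ z : Z₂, ∃ a : Z₁, dist z (f a) ≤ ε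

instance coveringGroup_normal (X : Type*) [MetricSpace X] (p : X) (δ : ℝ) :
    (coveringGroup X p δ).Normal :=
  Subgroup.normalClosure_normal

instance cutCoveringGroup_normal (X : Type*) [MetricSpace X] (x : X) (δ R : ℝ) :
    (cutCoveringGroup X x δ R).Normal :=
  Subgroup.normalClosure_normal

/-! Since `δ` lies in the cut-off spectrum, for `δ < δ' < δ₁` some loop `β` inside a ball
`B(c, δ')` has a class outside `π₁^{cut}(X, δ, R, x)`. Fix `0 < ε ≤ min δ (δ₁ - δ)`, cut `β` at
parameters `t₀ < ⋯ < tₙ` into arcs staying `ε`-close to their initial points, and join `c` to every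
`β tₖ` by a path `pₖ` of length `< δ'`. Then `β`, conjugated back to `c`, is the product of the
loops `pₖ · β|[tₖ, tₖ₊₁] · pₖ₊₁⁻¹` and of the short loop `p₀ · pₙ⁻¹`; replacing each arc by a chord
of length `< ε` writes every such loop as a loop of length `< 2δ' + ε ≤ 2δ₁` times a conjugate of a
loop inside an `ε`-ball. The latter lie in `π₁^{cut}(X, δ, R, x)`, so a loop of length `< 2δ₁`
does not. -/

open CategoryTheory Set

section LoopClass

variable {X : Type*} [TopologicalSpace X] {x y c u v w : X}

def Path.toHom (p : Path u v) : FundamentalGroupoid.mk u ⟶ FundamentalGroupoid.mk v :=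
  FundamentalGroupoid.fromPath (Path.Homotopic.Quotient.mk p)

@[simp] lemma Path.toHom_trans (p : Path u v) (q : Path v w) :
    (p.trans q).toHom = p.toHom ≫ q.toHom := rfl

@[simp] lemma Path.toHom_refl (u : X) : (Path.refl u).toHom = 𝟙 _ := rfl

@[simp] lemma Path.toHom_symm (p : Path u v) : p.symm.toHom = CategoryTheory.inv p.toHom := by
  rw [← Groupoid.inv_eq_inv]; rfl

lemma Path.toHom_eq_toHom_iff {p q : Path u v} : p.toHom = q.toHom ↔ p.Homotopic q :=
  FundamentalGroupoid.fromPath_eq_iff_homotopic p q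

lemma Path.toHom_subpath_comp (γ : Path u v) (t₀ t₁ t₂ : I) :
    (γ.subpath t₀ t₁).toHom ≫ (γ.subpath t₁ t₂).toHom = (γ.subpath t₀ t₂).toHom :=
  Path.toHom_eq_toHom_iff.2 ⟨Path.Homotopy.subpathTransSubpath γ t₀ t₁ t₂⟩

lemma loopClass_eq_toHom (α : Path x y) (β : Path y y) :
    loopClass α β = α.toHom ≫ β.toHom ≫ inv α.toHom := by
  rw [← Path.toHom_symm, ← Category.assoc]; rfl

lemma loopClass_trans_trans_symm_self (α : Path x y) (p : Path y c) (γ : Path c c) :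
    loopClass α ((p.trans γ).trans p.symm) = loopClass (α.trans p) γ := by
  simp [loopClass_eq_toHom]

lemma loopClass_trans_trans_symm_eq_mul (α : Path x c) (p q : Path c y) (β : Path y y) :
    loopClass α ((p.trans β).trans q.symm) =
      loopClass α (p.trans q.symm) * loopClass (α.trans p) β := by
  simp [loopClass_eq_toHom, End.mul_def]

lemma loopClass_trans_trans_symm_of_comp_eq {a b d : X} (α : Path x c) (p : Path c a)
    (q : Path c b) (r : Path c d) (f : Path a b) (g : Path b d) (h : Path a d)
    (hfg : f.toHom ≫ g.toHom = h.toHom) :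
    loopClass α ((p.trans h).trans r.symm) =
      loopClass α ((q.trans g).trans r.symm) * loopClass α ((p.trans f).trans q.symm) := by
  simp [loopClass_eq_toHom, End.mul_def, ← hfg]

lemma loopClass_eq_conj (α α' : Path x y) (β : Path y y) :
    loopClass α' β = FundamentalGroup.fromArrow (α.toHom ≫ inv α'.toHom) * loopClass α β *
      (FundamentalGroup.fromArrow (α.toHom ≫ inv α'.toHom))⁻¹ := by
  have hinv : (FundamentalGroup.fromArrow (α.toHom ≫ inv α'.toHom))⁻¹ =
      FundamentalGroup.fromArrow (α'.toHom ≫ inv α.toHom) :=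
    inv_eq_of_mul_eq_one_right (by simp [End.mul_def, End.one_def])
  rw [hinv]
  simp [loopClass_eq_toHom, End.mul_def]

lemma loopClass_mem_iff {N : Subgroup (FundamentalGroup X x)} [hN : N.Normal]
    (α α' : Path x y) (β : Path y y) : loopClass α β ∈ N ↔ loopClass α' β ∈ N :=
  ⟨fun h => loopClass_eq_conj α α' β ▸ hN.conj_mem _ h _,
    fun h => loopClass_eq_conj α' α β ▸ hN.conj_mem _ h _⟩

lemma loopClass_trans_subpath_trans_symm_mem {N : Subgroup (FundamentalGroup X x)} {a b : X}
    (α : Path x c) (β : Path a b) (t : ℕ → I) (p : ∀ k, Path c (β (t k)))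
    (h : ∀ k,
      loopClass α (((p k).trans (β.subpath (t k) (t (k + 1)))).trans (p (k + 1)).symm) ∈ N)
    (n : ℕ) : loopClass α (((p 0).trans (β.subpath (t 0) (t n))).trans (p n).symm) ∈ N := by
  induction n with
  | zero => simpa [loopClass_eq_toHom] using N.one_mem
  | succ n ih =>
    rw [loopClass_trans_trans_symm_of_comp_eq α (p 0) (p n) (p (n + 1)) _ _ _
      (Path.toHom_subpath_comp β _ _ _)]
    exact mul_mem (h n) ih

end LoopClass

section PathLength

variable {X : Type*} [MetricSpace X] {u v w : X}

lemma edist_le_pathLength (γ : Path u v) (s t : I) : edist (γ s) (γ t) ≤ pathLength γ :=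
  eVariationOn.edist_le _ (mem_univ s) (mem_univ t)

lemma Path.mem_ball_of_pathLength_lt {γ : Path u v} {r : ℝ}
    (hγ : pathLength γ < ENNReal.ofReal r) (t : I) : γ t ∈ ball u r := by
  have h := (edist_le_pathLength γ t 0).trans_lt hγ
  rwa [γ.source, edist_lt_ofReal] at h

lemma pathLength_cast {u' v' : X} (γ : Path u v) (hu : u' = u) (hv : v' = v) :
    pathLength (γ.cast hu hv) = pathLength γ := rfl

lemma pathLength_symm (γ : Path u v) : pathLength γ.symm = pathLength γ := by
  have h := eVariationOn.comp_eq_of_antitoneOn (⇑γ) (t := univ) σ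
    (fun a _ b _ hab => unitInterval.symm_le_symm.2 hab)
  rwa [image_univ_of_surjective unitInterval.symm_bijective.surjective] at h

lemma pathLength_trans_le (γ : Path u v) (γ' : Path v w) :
    pathLength (γ.trans γ') ≤ pathLength γ + pathLength γ' := by
  let half : I := ⟨1 / 2, by norm_num, by norm_num⟩
  have hmono₁ : Monotone fun t : I => projIcc (0 : ℝ) 1 zero_le_one (2 * t) :=
    fun a b hab => monotone_projIcc _ (by gcongr)
  have hmono₂ : Monotone fun t : I => projIcc (0 : ℝ) 1 zero_le_one (2 * t - 1) :=
    fun a b hab => monotone_projIcc _ (by gcongr)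
  rw [pathLength, ← Iic_union_Ici (a := half), eVariationOn.union _ isGreatest_Iic isLeast_Ici]
  gcongr
  · calc eVariationOn (γ.trans γ') (Iic half)
        = eVariationOn (γ ∘ fun t : I => projIcc (0 : ℝ) 1 zero_le_one (2 * t)) (Iic half) :=
          eVariationOn.eq_of_eqOn fun t (ht : t ≤ half) => by
            rw [← Path.extend_extends', Path.extend_trans_of_le_half _ _ ht]; rfl
      _ ≤ pathLength γ :=
          eVariationOn.comp_le_of_monotoneOn _ _ (hmono₁.monotoneOn _) (mapsTo_univ _ _)
  · calc eVariationOn (γ.trans γ') (Ici half)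
        = eVariationOn (γ' ∘ fun t : I => projIcc (0 : ℝ) 1 zero_le_one (2 * t - 1)) (Ici half) :=
          eVariationOn.eq_of_eqOn fun t (ht : half ≤ t) => by
            rw [← Path.extend_extends', Path.extend_trans_of_half_le _ _ ht]; rfl
      _ ≤ pathLength γ' :=
          eVariationOn.comp_le_of_monotoneOn _ _ (hmono₂.monotoneOn _) (mapsTo_univ _ _)

lemma pathLength_trans_lt {γ : Path u v} {γ' : Path v w} {a b : ℝ≥0∞}
    (hγ : pathLength γ < a) (hγ' : pathLength γ' < b) : pathLength (γ.trans γ') < a + b :=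
  (pathLength_trans_le γ γ').trans_lt (ENNReal.add_lt_add hγ hγ')

lemma IsLengthSpace.exists_pathLength_lt (hX : IsLengthSpace X) {r : ℝ} (h : dist u v < r) :
    ∃ γ : Path u v, pathLength γ < ENNReal.ofReal r := by
  rw [← iInf_lt_iff, ← hX, ENNReal.ofReal_lt_ofReal_iff (dist_nonneg.trans_lt h)]
  exact h

end PathLength

lemma exists_partition_image_uIcc_subset_ball {Y : Type*} [PseudoMetricSpace Y] {f : I → Y} (hf : Continuous f) {ε : ℝ}
    (hε : 0 < ε) : ∃ (t : ℕ → I) (n : ℕ), t 0 = 0 ∧ t n = 1 ∧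
      ∀ k, f '' uIcc (t k) (t (k + 1)) ⊆ ball (f (t k)) ε := by
  obtain ⟨η, hη, hfη⟩ := Metric.uniformContinuous_iff.1
    (CompactSpace.uniformContinuous_of_continuous hf) ε hε
  obtain ⟨n, hn⟩ := exists_nat_one_div_lt hη
  set t : ℕ → I := fun k => projIcc 0 1 zero_le_one (k / (n + 1)) with ht
  have hstep : ∀ k, dist (t k) (t (k + 1)) ≤ 1 / (n + 1) := fun k => by
    refine ((LipschitzWith.projIcc zero_le_one).dist_le_mul _ _).trans_eq ?_
    rw [NNReal.coe_one, one_mul, Real.dist_eq, abs_sub_comm, ← sub_div]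
    push_cast
    rw [add_sub_cancel_left, abs_of_pos (by positivity)]
  refine ⟨t, n + 1, by simp [ht],
    by simp [ht, div_self (Nat.cast_add_one_ne_zero (R := ℝ) n)], ?_⟩
  rintro k _ ⟨s, hs, rfl⟩
  refine mem_ball.2 (hfη ?_)
  calc dist s (t k) = dist (t k : ℝ) (s : ℝ) := dist_comm _ _
    _ ≤ dist (t k : ℝ) (t (k + 1) : ℝ) :=
        Real.dist_left_le_of_mem_uIcc (Subtype.mono_coe _ |>.mapsTo_uIcc hs)
    _ ≤ 1 / (n + 1) := hstep k
    _ < η := hn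

section ShortLoops

variable {X : Type*} [MetricSpace X] {x : X}

lemma IsLengthSpace.loopClass_trans_trans_symm_mem (hX : IsLengthSpace X)
    {N : Subgroup (FundamentalGroup X x)} {ε ρ : ℝ}
    (hsmall : ∀ (y z : X) (γ : Path y y) (α : Path x y), (∀ t, γ t ∈ ball z ε) →
      loopClass α γ ∈ N)
    (hshort : ∀ (y : X) (γ : Path y y) (α : Path x y),
      pathLength γ < ENNReal.ofReal (2 * ρ + ε) → loopClass α γ ∈ N)
    {a b c : X} (α : Path x c) {p : Path c a} {p' : Path c b} (s : Path a b)
    (hp : pathLength p < ENNReal.ofReal ρ) (hp' : pathLength p' < ENNReal.ofReal ρ)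
    (hs : range s ⊆ ball a ε) : loopClass α ((p.trans s).trans p'.symm) ∈ N := by
  have hρ : 0 < ρ := ENNReal.ofReal_pos.1 (pos_of_gt hp)
  obtain ⟨q, hq⟩ := hX.exists_pathLength_lt (mem_ball'.1 (hs ⟨1, s.target⟩))
  have hε : 0 < ε := pos_of_mem_ball (hs ⟨0, s.source⟩)
  -- `s` is homotopic to the chord `q` followed by the loop `q⁻¹ · s`
  rw [loopClass_trans_trans_symm_of_comp_eq α p p' p' q (q.symm.trans s) s (by simp),
    loopClass_trans_trans_symm_self]
  refine mul_mem (hsmall _ a _ _ ?_) (hshort _ _ _ ?_)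
  · rw [← range_subset_iff, Path.trans_range, union_subset_iff]
    refine ⟨?_, hs⟩
    rintro _ ⟨t, rfl⟩
    exact q.mem_ball_of_pathLength_lt hq _
  · calc _ < ENNReal.ofReal ρ + ENNReal.ofReal ε + ENNReal.ofReal ρ :=
          pathLength_trans_lt (pathLength_trans_lt hp hq) (by rwa [pathLength_symm])
      _ = ENNReal.ofReal (2 * ρ + ε) := by
          rw [← ENNReal.ofReal_add hρ.le hε.le, ← ENNReal.ofReal_add (by positivity) hρ.le]
          ring_nf

theorem IsLengthSpace.loopClass_mem_of_forall_mem_ball (hX : IsLengthSpace X)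
    {N : Subgroup (FundamentalGroup X x)} [N.Normal] {ε ρ : ℝ} (hε : 0 < ε)
    (hsmall : ∀ (y z : X) (γ : Path y y) (α : Path x y), (∀ t, γ t ∈ ball z ε) →
      loopClass α γ ∈ N)
    (hshort : ∀ (y : X) (γ : Path y y) (α : Path x y),
      pathLength γ < ENNReal.ofReal (2 * ρ + ε) → loopClass α γ ∈ N)
    {y c : X} (β : Path y y) (α : Path x y) (hβ : ∀ t, β t ∈ ball c ρ) : loopClass α β ∈ N := by
  have hρ : 0 < ρ := pos_of_mem_ball (hβ 0)
  obtain ⟨t, n, ht0, htn, hfine⟩ := exists_partition_image_uIcc_subset_ball β.continuous hε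
  choose p hp using fun s => hX.exists_pathLength_lt (mem_ball'.1 (hβ s))
  let p₀ : Path c y := (p 0).cast rfl β.source.symm
  let p₁ : Path c y := (p 1).cast rfl β.target.symm
  let αc : Path x c := α.trans p₀.symm
  have hchain := loopClass_trans_subpath_trans_symm_mem αc β t (fun k => p (t k))
    (fun k => hX.loopClass_trans_trans_symm_mem hsmall hshort αc _ (hp _) (hp _)
      (by rw [Path.range_subpath]; exact hfine k)) n
  rw [ht0, htn, Path.subpath_zero_one] at hchain
  have hloop : ((p 0).trans (β.cast β.source β.target)).trans (p 1).symm =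
      (p₀.trans β).trans p₁.symm := by
    ext s; rfl
  rw [hloop, loopClass_trans_trans_symm_eq_mul] at hchain
  have hshort₀ : loopClass αc (p₀.trans p₁.symm) ∈ N := by
    refine hshort _ _ _ ((pathLength_trans_lt (by rw [pathLength_cast]; exact hp 0)
      (by rw [pathLength_symm, pathLength_cast]; exact hp 1)).trans_le ?_)
    rw [← ENNReal.ofReal_add hρ.le hρ.le]
    exact ENNReal.ofReal_le_ofReal (by linarith)
  exact (loopClass_mem_iff _ _ _).1 ((N.mul_mem_cancel_left hshort₀).1 hchain)

end ShortLoops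

section CutCoveringGroup

variable {X : Type*} [MetricSpace X] {x : X} {δ δ' R : ℝ}

lemma loopClass_mem_cutCoveringGroup_of_forall_mem_ball {y z : X} (γ : Path y y)
    (α : Path x y) (h : ∀ t, γ t ∈ ball z δ) : loopClass α γ ∈ cutCoveringGroup X x δ R :=
  Subgroup.subset_normalClosure ⟨y, γ, α, Or.inl ⟨z, h⟩, rfl⟩

lemma cutCoveringGroup_mono (h : δ ≤ δ') :
    cutCoveringGroup X x δ R ≤ cutCoveringGroup X x δ' R := by
  refine Subgroup.normalClosure_mono ?_
  rintro _ ⟨y, β, α, ⟨z, hz⟩ | hβ, rfl⟩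
  · exact ⟨y, β, α, Or.inl ⟨z, fun t => ball_subset_ball h (hz t)⟩, rfl⟩
  · exact ⟨y, β, α, Or.inr hβ, rfl⟩

lemma exists_loopClass_not_mem_of_cutCoveringGroup_ne (h : δ ≤ δ')
    (hne : cutCoveringGroup X x δ' R ≠ cutCoveringGroup X x δ R) :
    ∃ (y z : X) (β : Path y y) (α : Path x y),
      (∀ t, β t ∈ ball z δ') ∧ loopClass α β ∉ cutCoveringGroup X x δ R := by
  by_contra! hball
  refine hne (le_antisymm (Subgroup.normalClosure_le_normal ?_) (cutCoveringGroup_mono h))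
  rintro _ ⟨y, β, α, ⟨z, hz⟩ | hβ, rfl⟩
  · exact hball y z β α hz
  · exact Subgroup.subset_normalClosure ⟨y, β, α, Or.inr hβ, rfl⟩

theorem IsLengthSpace.exists_short_loop_not_mem_cutCoveringGroup (hX : IsLengthSpace X)
    (hδ : 0 < δ) (hne : ∀ δ' > δ, cutCoveringGroup X x δ' R ≠ cutCoveringGroup X x δ R)
    {δ₁ : ℝ} (hδ₁ : δ < δ₁) : ∃ (y : X) (τ : Path y y) (α : Path x y),
      pathLength τ < ENNReal.ofReal (2 * δ₁) ∧ loopClass α τ ∉ cutCoveringGroup X x δ R := by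
  obtain ⟨y, z, β, α, hβ, hβN⟩ := exists_loopClass_not_mem_of_cutCoveringGroup_ne
    (by linarith : δ ≤ (δ + δ₁) / 2) (hne _ (by linarith))
  by_contra! hshort
  have hε : min δ (δ₁ - δ) ≤ δ₁ - δ := min_le_right _ _
  exact hβN (hX.loopClass_mem_of_forall_mem_ball (lt_min hδ (sub_pos.2 hδ₁))
    (fun y z γ α hγ => loopClass_mem_cutCoveringGroup_of_forall_mem_ball γ α
      fun t => ball_subset_ball (min_le_left _ _) (hγ t))
    (fun y γ α hγ => hshort y γ α (hγ.trans_le (ENNReal.ofReal_le_ofReal (by linarith))))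
    β α hβ)

end CutCoveringGroup

theorem exists_short_loops_of_mem_cutCovSpec_general
    {X : Type*} [MetricSpace X]
    (hX : IsLengthSpace X) (x : X) (R δ : ℝ)
    (hδ : δ ∈ cutCovSpec X x R) :
    ∃ δseq : ℕ → ℝ, StrictAnti δseq ∧ (∀ j, δ < δseq j) ∧
      Tendsto δseq atTop (nhds δ) ∧
      ∀ j, ∃ (y : X) (τ : Path y y) (α : Path x y),
        pathLength τ < ENNReal.ofReal (2 * δseq j) ∧
        loopClass α τ ∉ cutCoveringGroup X x δ R := by
  obtain ⟨hδ, hne⟩ := hδ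
  obtain ⟨δseq, hanti, hgt, hlim⟩ := exists_seq_strictAnti_tendsto δ
  exact ⟨δseq, hanti, hgt, hlim,
    fun j => hX.exists_short_loop_not_mem_cutCoveringGroup hδ hne (hgt j)⟩

/-- In a complete locally compact length space, if
`δ ∈ CovSpec^R_cut(X,x)` then there are `δ_j` strictly decreasing to `δ` and
rectifiable loops `σ_j` of length `< 2δ_j` whose classes (conjugated back to the
basepoint) do not lie in `π₁^{cut}(X,δ,R,x)`. -/
theorem exists_short_loops_of_mem_cutCovSpec
    {X : Type*} [MetricSpace X] [CompleteSpace X] [LocallyCompactSpace X]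
    (hX : IsLengthSpace X) (x : X) (R δ : ℝ) (hR : 0 < R)
    (hδ : δ ∈ cutCovSpec X x R) :
    ∃ δseq : ℕ → ℝ, StrictAnti δseq ∧ (∀ j, δ < δseq j) ∧
      Tendsto δseq atTop (nhds δ) ∧
      ∀ j, ∃ (y : X) (τ : Path y y) (α : Path x y),
        pathLength τ < ENNReal.ofReal (2 * δseq j) ∧
        loopClass α τ ∉ cutCoveringGroup X x δ R :=
  exists_short_loops_of_mem_cutCovSpec_general hX x R δ hδ
end

section
/- Let X be a complete locally compact length space that is homeomorphic to a product M × ℝ for some topological space M. Then X has the loops-to-infinity property, and consequently π₁^{cut}(X,δ,R,x) = π₁(X,x) and CovSpec^R_cut(X,x) = ∅ for every basepoint x ∈ X and all δ > 0, R > 0. -/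
/- Common definitions: path length, length/geodesic spaces, δ-covering groups,
   covering spectra, cut-off covering groups and spectra, free homotopy,
   loops-to-infinity. -/

open Metric Filter
open scoped NNReal ENNReal unitInterval

attribute [local instance] Path.Homotopic.setoid

/-!
Translating along the `ℝ`-factor, `(m, s) ↦ (m, s + τc)` for `τ ∈ [0, 1]`, is a free homotopy
that pushes any loop off a given compact set. A free homotopy conjugates a loop to the final
loop by the track of the basepoint, so every loop at `x` is conjugate to a loop outside
`B̄(x, R)` as soon as that ball is compact. Compactness of closed balls is the Hopf–Rinow
theorem for complete locally compact length spaces: in a length space every point of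
`B̄(x, r + ε)` is `2ε`-close to `B̄(x, r)`, so the radii of compact balls form an interval that
is closed (by total boundedness and completeness) and open (by local compactness). Hence every
cut-off covering group is all of `π₁`, and the cut-off spectrum has no jumps.
-/

section LengthSpace
variable {X : Type*} [MetricSpace X]

theorem edist_add_edist_le_pathLength {x y : X} (γ : Path x y) (t : I) :
    edist x (γ t) + edist (γ t) y ≤ pathLength γ := by
  have hsplit := eVariationOn.Icc_add_Icc γ unitInterval.nonneg' unitInterval.le_one'
    (Set.mem_univ t)
  rw [Set.univ_inter, Set.univ_inter, Set.univ_inter, ← unitInterval.univ_eq_Icc] at hsplit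
  rw [pathLength, ← hsplit]
  have h₁ := eVariationOn.edist_le γ (Set.left_mem_Icc.2 (unitInterval.nonneg' (t := t)))
    (Set.right_mem_Icc.2 unitInterval.nonneg')
  have h₂ := eVariationOn.edist_le γ (Set.left_mem_Icc.2 (unitInterval.le_one' (t := t)))
    (Set.right_mem_Icc.2 unitInterval.le_one')
  rw [γ.source] at h₁
  rw [γ.target] at h₂
  exact add_le_add h₁ h₂

theorem IsLengthSpace.exists_dist_le_of_dist_le_add (hX : IsLengthSpace X) {x z : X} {r ε : ℝ}
    (hr : 0 ≤ r) (hε : 0 < ε) (hz : dist x z ≤ r + ε) :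
    ∃ y, dist x y ≤ r ∧ dist y z ≤ 2 * ε := by
  rcases le_or_gt (dist x z) r with hzr | hrz
  · exact ⟨z, hzr, by simp [hε.le]⟩
  obtain ⟨γ, hγ⟩ : ∃ γ : Path x z, pathLength γ < ENNReal.ofReal (dist x z + ε) := by
    rw [← iInf_lt_iff, ← hX]
    exact ENNReal.ofReal_lt_ofReal_iff'.2 ⟨by linarith, by positivity⟩
  obtain ⟨t, ht⟩ : ∃ t, dist x (γ t) = r :=
    intermediate_value_univ 0 1 (continuous_const.dist γ.continuous)
      (by simpa using ⟨hr, hrz.le⟩)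
  -- `γ t` is where a nearly shortest path from `x` to `z` crosses the sphere of radius `r`
  refine ⟨γ t, ht.le, ?_⟩
  have hlen := (edist_add_edist_le_pathLength γ t).trans hγ.le
  rw [edist_dist, edist_dist, ht, ← ENNReal.ofReal_add hr dist_nonneg,
    ENNReal.ofReal_le_ofReal_iff (by positivity)] at hlen
  linarith

theorem IsLengthSpace.exists_isCompact_closedBall_add [LocallyCompactSpace X]
    (hX : IsLengthSpace X) {x : X} {r : ℝ} (hr : 0 ≤ r) (hc : IsCompact (closedBall x r)) :
    ∃ ε > 0, IsCompact (closedBall x (r + ε)) := by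
  obtain ⟨δ, hδ, hK⟩ := hc.exists_isCompact_cthickening
  refine ⟨δ / 2, half_pos hδ, hK.of_isClosed_subset isClosed_closedBall fun z hz => ?_⟩
  obtain ⟨y, hy, hyz⟩ :=
    hX.exists_dist_le_of_dist_le_add hr (half_pos hδ) (by rwa [dist_comm, ← mem_closedBall])
  rw [mul_div_cancel₀ _ two_ne_zero] at hyz
  exact mem_cthickening_of_dist_le z y δ _ (by rwa [mem_closedBall, dist_comm]) (by rwa [dist_comm])

theorem IsLengthSpace.isCompact_closedBall_of_forall_lt [CompleteSpace X] (hX : IsLengthSpace X)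
    {x : X} {r : ℝ} (hr : 0 < r) (h : ∀ r' < r, IsCompact (closedBall x r')) :
    IsCompact (closedBall x r) := by
  refine (totallyBounded_iff.2 fun ε hε => ?_).isCompact_of_isClosed isClosed_closedBall
  set δ := min (ε / 4) r
  have hδ : 0 < δ := lt_min (by positivity) hr
  obtain ⟨t, -, ht, hcover⟩ := (h (r - δ) (sub_lt_self r hδ)).finite_cover_balls (half_pos hε)
  refine ⟨t, ht, fun z hz => ?_⟩
  obtain ⟨y, hy, hyz⟩ := hX.exists_dist_le_of_dist_le_add (sub_nonneg.2 (min_le_right _ _)) hδ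
    (by rw [sub_add_cancel, dist_comm]; exact hz)
  obtain ⟨w, hw, hyw⟩ := Set.mem_iUnion₂.1 (hcover (by rwa [mem_closedBall, dist_comm]))
  refine Set.mem_iUnion₂.2 ⟨w, hw, ?_⟩
  have : δ ≤ ε / 4 := min_le_left _ _
  calc dist z w ≤ dist y z + dist y w := dist_triangle_left z w y
    _ < ε := by rw [mem_ball] at hyw; linarith

theorem IsLengthSpace.properSpace [CompleteSpace X] [LocallyCompactSpace X]
    (hX : IsLengthSpace X) : ProperSpace X := by
  refine ⟨fun x R => by_contra fun hR => ?_⟩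
  have mono : ∀ {r s}, r ≤ s → IsCompact (closedBall x s) → IsCompact (closedBall x r) :=
    fun hrs hs => hs.of_isClosed_subset isClosed_closedBall (closedBall_subset_closedBall hrs)
  set T := {r | ¬IsCompact (closedBall x r)}
  have hT : T.Nonempty := ⟨R, hR⟩
  have hTbdd : BddBelow T := ⟨0, fun r hr => not_lt.1 fun hr₀ =>
    hr (by rw [closedBall_eq_empty.2 hr₀]; exact isCompact_empty)⟩
  have below : ∀ r < sInf T, IsCompact (closedBall x r) :=
    fun r hr => by_contra fun hc => (csInf_le hTbdd hc).not_gt hr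
  obtain ⟨r₀, hr₀, hc₀⟩ := exists_isCompact_closedBall x
  have hpos : 0 < sInf T :=
    hr₀.trans_le (le_csInf hT fun r hr => not_lt.1 fun hr' => hr (mono hr'.le hc₀))
  obtain ⟨ε, hε, hc⟩ := hX.exists_isCompact_closedBall_add hpos.le
    (hX.isCompact_closedBall_of_forall_lt hpos below)
  obtain ⟨r, hrT, hr⟩ := exists_lt_of_csInf_lt hT (lt_add_of_pos_right (sInf T) hε)
  exact hrT (mono hr.le hc)

end LengthSpace

section FreeHomotopy
variable {X : Type*} [TopologicalSpace X]

theorem FreelyHomotopic.exists_homotopic_trans_symm {a b : X} {γ : Path a a} {η : Path b b}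
    (h : FreelyHomotopic γ η) : ∃ α : Path a b, γ.Homotopic ((α.trans η).trans α.symm) := by
  obtain ⟨H, h₀, h₁, hper⟩ := h
  let F : ContinuousMap.Homotopy (γ : C(I, X)) η :=
    { toContinuousMap := H, map_zero_left := h₀, map_one_left := h₁ }
  have hF : ∀ p, F p = H p := fun _ => rfl
  let α : Path a b := (F.evalAt 0).cast γ.source.symm η.source.symm
  have key : (γ.trans α).Homotopic (α.trans η) := by
    convert (Path.Homotopic.map_trans_evalAt F Path.id).pathCast γ.source.symm η.target.symm
      using 1 <;> ext t <;> simp [Path.trans_apply, α, ContinuousMap.Homotopy.evalAt, hF, hper]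
  refine ⟨α, ?_⟩
  calc γ ≈ γ.trans (α.trans α.symm) :=
        (Path.Homotopic.trans_refl γ).symm.trans
          ((Path.Homotopic.refl γ).hcomp (Path.Homotopic.trans_symm α).symm)
    _ ≈ (γ.trans α).trans α.symm := (Path.Homotopic.trans_assoc γ α α.symm).symm
    _ ≈ (α.trans η).trans α.symm := key.hcomp (.refl _)

end FreeHomotopy

section CutCoveringGroup
variable {X : Type*} [MetricSpace X]

theorem LoopsToInfinity.cutCoveringGroup_eq_top (hX : LoopsToInfinity X) {x : X} {R : ℝ}
    (hR : IsCompact (closedBall x R)) (δ : ℝ) : cutCoveringGroup X x δ R = ⊤ := by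
  refine eq_top_iff.2 fun g _ => ?_
  obtain ⟨γ, rfl⟩ := Quotient.exists_rep (FundamentalGroup.toPath (X := TopCat.of X) g)
  obtain ⟨y, η, hη, hγη⟩ := hX x γ _ hR
  obtain ⟨α, hγ⟩ := hγη.exists_homotopic_trans_symm
  exact Subgroup.subset_normalClosure ⟨y, η, α, .inr hη, Quotient.sound hγ⟩

theorem cutCovSpec_eq_empty {x : X} {R : ℝ} (h : ∀ δ, cutCoveringGroup X x δ R = ⊤) :
    cutCovSpec X x R = ∅ :=
  Set.eq_empty_of_forall_notMem fun δ hδ => hδ.2 (δ + 1) (lt_add_one δ) (by rw [h, h])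

end CutCoveringGroup

namespace Homeomorph
variable {X M : Type*} [TopologicalSpace X] [TopologicalSpace M]

def shiftSnd (e : X ≃ₜ M × ℝ) (c : ℝ) (x : X) : X :=
  e.symm ((e x).1, (e x).2 + c)

@[simp]
theorem shiftSnd_zero (e : X ≃ₜ M × ℝ) (x : X) : e.shiftSnd 0 x = x := by
  simp [shiftSnd]

theorem continuous_shiftSnd (e : X ≃ₜ M × ℝ) :
    Continuous fun p : ℝ × X => e.shiftSnd p.1 p.2 := by
  unfold shiftSnd; fun_prop

theorem exists_shiftSnd_image_disjoint (e : X ≃ₜ M × ℝ) {L K : Set X} (hL : IsCompact L)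
    (hK : IsCompact K) : ∃ c : ℝ, ∀ y ∈ L, e.shiftSnd c y ∉ K := by
  obtain ⟨B, hB⟩ := ((hK.image e.continuous).image continuous_snd).bddAbove
  obtain ⟨m, hm⟩ := ((hL.image e.continuous).image continuous_snd).bddBelow
  refine ⟨B - m + 1, fun y hy hyK => ?_⟩
  have hle : (e y).2 + (B - m + 1) ≤ B := by
    simpa [shiftSnd] using hB ⟨_, ⟨_, hyK, rfl⟩, rfl⟩
  have hge : m ≤ (e y).2 := hm ⟨_, ⟨y, hy, rfl⟩, rfl⟩
  linarith

theorem loopsToInfinity (e : X ≃ₜ M × ℝ) : LoopsToInfinity X := by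
  intro a γ K hK
  obtain ⟨c, hc⟩ := e.exists_shiftSnd_image_disjoint (isCompact_range γ.continuous) hK
  let H : C(I × I, X) :=
    ⟨fun st => e.shiftSnd (st.1 * c) (γ st.2),
      e.continuous_shiftSnd.comp (f := fun st : I × I => ((st.1 : ℝ) * c, γ st.2))
        (by fun_prop)⟩
  refine ⟨e.shiftSnd c a, γ.map (e.continuous_shiftSnd.comp (Continuous.prodMk_right c)),
    fun t => hc _ ⟨t, rfl⟩, H, fun _ => ?_, fun _ => ?_, fun _ => ?_⟩ <;> simp [H]

end Homeomorph

/-- A complete locally compact length space homeomorphic to `M × ℝ` has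
the loops-to-infinity property; consequently its cut-off covering groups are the whole
fundamental group and its `R` cut-off covering spectra are empty. -/
theorem loopsToInfinity_of_homeomorph_prod_real
    {X M : Type*} [MetricSpace X] [CompleteSpace X] [LocallyCompactSpace X]
    [TopologicalSpace M] (hX : IsLengthSpace X) (e : X ≃ₜ M × ℝ) :
    LoopsToInfinity X ∧
    ∀ (x : X) (δ R : ℝ), 0 < δ → 0 < R →
      cutCoveringGroup X x δ R = ⊤ ∧ cutCovSpec X x R = ∅ := by
  have hL : LoopsToInfinity X := e.loopsToInfinity
  have := hX.properSpace
  have htop (x : X) (δ R : ℝ) : cutCoveringGroup X x δ R = ⊤ :=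
    hL.cutCoveringGroup_eq_top (isCompact_closedBall x R) δ
  exact ⟨hL, fun x δ R _ _ => ⟨htop x δ R, cutCovSpec_eq_empty (htop x · R)⟩⟩
end
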